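/- Let q, β > 0, 0 < α < 1, n ∈ ℕ with n^{1-α} > 2, and let f : ℝ → ℝ be bounded and continuous. Then for every x ∈ ℝ, |B_n(f)(x) - f(x)| ≤ ω(f, n^{-α}) + 2(q + 1/q)‖f‖_∞ · e^{-β(n^{1-α} - 1)}, where ω is the modulus of continuity. -/

import Mathlib

/-!
The kernel `Ψ` is nonnegative, even and of total mass one. A primitive of `ν_q` is
`F(t) = t + (2/β) log (1 + q e^{-βt})`, so `(F(t+1) - F(t-1))/4` is a primitive of `G_q` tending
to `1/2` at `+∞`; the reflection `G_q(-t) = G_{1/q}(t)` makes `Ψ` even and pins down the value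
of the primitives at `0`. On `[T-1, T+1]` one has `1 - ν_q ≤ 2q e^{-β(T-1)}`, which gives the
tail bound `∫_T^∞ Ψ ≤ (q + 1/q)/2 · e^{-β(T-1)}`.

Since `B_n f(x) - f(x) = ∫ (f(x - t/n) - f(x)) Ψ(t) dt`, the range `|t| ≤ T = n^{1-α}`
contributes at most `ω(f, T/n) = ω(f, n^{-α})`, and each of the two tails at most
`2‖f‖_∞ ∫_T^∞ Ψ`.
-/

open MeasureTheory Filter Real

noncomputable def nu (q β x : ℝ) : ℝ :=
  (1 - q * Real.exp (-β * x)) / (1 + q * Real.exp (-β * x))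

noncomputable def G (q β x : ℝ) : ℝ := (1/4) * (nu q β (x+1) - nu q β (x-1))

noncomputable def Psi (q β x : ℝ) : ℝ := (G q β x + G (1/q) β x) / 2

noncomputable def omega (f : ℝ → ℝ) (θ : ℝ) : ℝ :=
  sSup {d : ℝ | ∃ x y : ℝ, |x - y| ≤ θ ∧ d = |f x - f y|}

noncomputable def supNorm (f : ℝ → ℝ) : ℝ := ⨆ x : ℝ, |f x|

noncomputable def B (q β : ℝ) (n : ℕ) (f : ℝ → ℝ) (x : ℝ) : ℝ :=
  ∫ v : ℝ, f (v / n) * Psi q β ((n : ℝ) * x - v)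

open Set Topology

variable {q β : ℝ}

lemma nu_eq_two_div_sub_one (hq : 0 ≤ q) (t : ℝ) : nu q β t = 2 / (1 + q * exp (-β * t)) - 1 := by
  have : 0 < 1 + q * exp (-β * t) := by positivity
  rw [nu]
  field_simp
  ring

lemma monotone_nu (hq : 0 ≤ q) (hβ : 0 ≤ β) : Monotone (nu q β) := by
  intro s t hst
  have : q * exp (-β * t) ≤ q * exp (-β * s) :=
    mul_le_mul_of_nonneg_left (exp_le_exp.2 (by nlinarith)) hq
  rw [nu_eq_two_div_sub_one hq, nu_eq_two_div_sub_one hq]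
  exact sub_le_sub_right (div_le_div_of_nonneg_left (by norm_num) (by positivity) (by linarith)) 1

lemma one_sub_nu_le (hq : 0 ≤ q) (t : ℝ) : 1 - nu q β t ≤ 2 * q * exp (-β * t) := by
  rw [nu_eq_two_div_sub_one hq, mul_assoc]
  set a := q * exp (-β * t)
  have ha : 0 ≤ a := by positivity
  have : 1 - (2 / (1 + a) - 1) = 2 * a / (1 + a) := by
    field_simp
    ring
  rw [this]
  exact div_le_self (by positivity) (by linarith)

lemma nu_neg (hq : 0 < q) (t : ℝ) : nu q β (-t) = -nu (1 / q) β t := by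
  have he : exp (-β * -t) = (exp (-β * t))⁻¹ := by rw [← exp_neg]; ring_nf
  have : 0 < exp (-β * t) := exp_pos _
  rw [nu, nu, he]
  field_simp
  ring

lemma G_neg (hq : 0 < q) (t : ℝ) : G q β (-t) = G (1 / q) β t := by
  rw [G, G, show -t + 1 = -(t - 1) by ring, show -t - 1 = -(t + 1) by ring, nu_neg hq, nu_neg hq]
  ring

lemma Psi_neg (hq : 0 < q) (t : ℝ) : Psi q β (-t) = Psi q β t := by
  rw [Psi, Psi, G_neg hq, G_neg (one_div_pos.2 hq), one_div_one_div]
  ring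

lemma G_nonneg (hq : 0 ≤ q) (hβ : 0 ≤ β) (t : ℝ) : 0 ≤ G q β t := by
  have := monotone_nu hq hβ (show t - 1 ≤ t + 1 by linarith)
  rw [G]
  linarith

lemma Psi_nonneg (hq : 0 < q) (hβ : 0 ≤ β) (t : ℝ) : 0 ≤ Psi q β t := by
  have := G_nonneg hq.le hβ t
  have := G_nonneg (one_div_pos.2 hq).le hβ t
  rw [Psi]
  linarith

noncomputable def nuPrimitive (q β t : ℝ) : ℝ := t + 2 / β * log (1 + q * exp (-β * t))

noncomputable def GPrimitive (q β t : ℝ) : ℝ :=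
  (nuPrimitive q β (t + 1) - nuPrimitive q β (t - 1)) / 4

lemma hasDerivAt_nuPrimitive (hq : 0 ≤ q) (hβ : β ≠ 0) (t : ℝ) :
    HasDerivAt (nuPrimitive q β) (nu q β t) t := by
  have hden : 0 < 1 + q * exp (-β * t) := by positivity
  have hinner : HasDerivAt (fun s => 1 + q * exp (-β * s)) (q * (exp (-β * t) * -β)) t :=
    ((((hasDerivAt_id t).const_mul (-β)).exp).const_mul q).const_add 1 |>.congr_deriv (by simp)
  refine ((hasDerivAt_id t).add ((hinner.log hden.ne').const_mul (2 / β))).congr_deriv ?_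
  rw [nu]
  field_simp
  ring

lemma hasDerivAt_GPrimitive (hq : 0 ≤ q) (hβ : β ≠ 0) (t : ℝ) :
    HasDerivAt (GPrimitive q β) (G q β t) t := by
  have h₁ := (hasDerivAt_nuPrimitive hq hβ (t + 1)).comp_add_const t 1
  have h₂ := (hasDerivAt_nuPrimitive hq hβ (t - 1)).comp_sub_const t 1
  refine ((h₁.sub h₂).div_const 4).congr_deriv ?_
  rw [G]
  ring

lemma tendsto_nuPrimitive_sub_atTop (hβ : 0 < β) :
    Tendsto (fun t => nuPrimitive q β t - t) atTop (𝓝 0) := by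
  have hexp : Tendsto (fun t => exp (-β * t)) atTop (𝓝 0) :=
    tendsto_exp_atBot.comp (tendsto_id.const_mul_atTop_of_neg (neg_neg_iff_pos.2 hβ))
  have hlog := ((hexp.const_mul q).const_add 1).log (by norm_num)
  simpa [nuPrimitive] using hlog.const_mul (2 / β)

lemma tendsto_GPrimitive_atTop (hβ : 0 < β) : Tendsto (GPrimitive q β) atTop (𝓝 (1 / 2)) := by
  have h (c : ℝ) : Tendsto (fun t => nuPrimitive q β (t + c) - (t + c)) atTop (𝓝 0) :=
    (tendsto_nuPrimitive_sub_atTop hβ).comp (tendsto_atTop_add_const_right _ c tendsto_id)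
  have := (((h 1).sub (h (-1))).const_add 2).div_const 4
  convert this using 2 with t
  · simp only [GPrimitive, ← sub_eq_add_neg]
    ring
  · norm_num

lemma nuPrimitive_neg (hq : 0 < q) (hβ : β ≠ 0) (t : ℝ) :
    nuPrimitive q β (-t) = nuPrimitive (1 / q) β t + 2 / β * log q := by
  have hfac : 1 + q * exp (-β * -t) = q * exp (β * t) * (1 + 1 / q * exp (-β * t)) := by
    rw [show -β * -t = β * t by ring, mul_add, mul_one, show -β * t = -(β * t) by ring, exp_neg]
    field_simp
    ring
  rw [nuPrimitive, nuPrimitive, hfac, log_mul (by positivity) (by positivity),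
    log_mul hq.ne' (exp_pos _).ne', log_exp]
  field_simp
  ring

lemma GPrimitive_neg (hq : 0 < q) (hβ : β ≠ 0) (t : ℝ) :
    GPrimitive q β (-t) = -GPrimitive (1 / q) β t := by
  rw [GPrimitive, GPrimitive, show -t + 1 = -(t - 1) by ring, show -t - 1 = -(t + 1) by ring,
    nuPrimitive_neg hq hβ, nuPrimitive_neg hq hβ]
  ring

lemma integral_G_Ioi (hq : 0 ≤ q) (hβ : 0 < β) (a : ℝ) :
    ∫ t in Ioi a, G q β t = 1 / 2 - GPrimitive q β a :=
  integral_Ioi_of_hasDerivAt_of_nonneg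
    (hasDerivAt_GPrimitive hq hβ.ne' a).continuousAt.continuousWithinAt
    (fun t _ => hasDerivAt_GPrimitive hq hβ.ne' t) (fun t _ => G_nonneg hq hβ.le t)
    (tendsto_GPrimitive_atTop hβ)

lemma integrableOn_G_Ioi (hq : 0 ≤ q) (hβ : 0 < β) (a : ℝ) : IntegrableOn (G q β) (Ioi a) :=
  integrableOn_Ioi_deriv_of_nonneg
    (hasDerivAt_GPrimitive hq hβ.ne' a).continuousAt.continuousWithinAt
    (fun t _ => hasDerivAt_GPrimitive hq hβ.ne' t) (fun t _ => G_nonneg hq hβ.le t)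
    (tendsto_GPrimitive_atTop hβ)

lemma integrableOn_Psi_Ioi (hq : 0 < q) (hβ : 0 < β) (a : ℝ) : IntegrableOn (Psi q β) (Ioi a) :=
  ((integrableOn_G_Ioi hq.le hβ a).add (integrableOn_G_Ioi (one_div_pos.2 hq).le hβ a)).div_const 2

lemma integral_Psi_Ioi (hq : 0 < q) (hβ : 0 < β) (a : ℝ) :
    ∫ t in Ioi a, Psi q β t = 1 / 2 - (GPrimitive q β a + GPrimitive (1 / q) β a) / 2 := by
  simp only [Psi]
  rw [integral_div, integral_add (integrableOn_G_Ioi hq.le hβ a)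
    (integrableOn_G_Ioi (one_div_pos.2 hq).le hβ a), integral_G_Ioi hq.le hβ,
    integral_G_Ioi (one_div_pos.2 hq).le hβ]
  ring

lemma integral_Psi_Iic_neg (hq : 0 < q) (a : ℝ) :
    ∫ t in Iic (-a), Psi q β t = ∫ t in Ioi a, Psi q β t := by
  simp only [← integral_comp_neg_Ioi, Psi_neg hq]

lemma integrableOn_Psi_Iic (hq : 0 < q) (hβ : 0 < β) (a : ℝ) :
    IntegrableOn (Psi q β) (Iic a) := by
  have := (integrableOn_Ici_iff_integrableOn_Ioi (μ := volume)).2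
    (integrableOn_Psi_Ioi hq hβ (-a)) |>.comp_neg_Iic
  simpa only [Psi_neg hq, neg_neg] using this

lemma integrable_Psi (hq : 0 < q) (hβ : 0 < β) : Integrable (Psi q β) := by
  rw [← integrableOn_univ, ← Iic_union_Ioi (a := 0)]
  exact (integrableOn_Psi_Iic hq hβ 0).union (integrableOn_Psi_Ioi hq hβ 0)

lemma integral_Psi (hq : 0 < q) (hβ : 0 < β) : ∫ t, Psi q β t = 1 := by
  have hsymm : GPrimitive q β 0 = -GPrimitive (1 / q) β 0 := by
    simpa using GPrimitive_neg hq hβ.ne' 0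
  rw [← intervalIntegral.integral_Iic_add_Ioi (integrableOn_Psi_Iic hq hβ 0)
    (integrableOn_Psi_Ioi hq hβ 0), ← neg_zero, integral_Psi_Iic_neg hq, neg_zero,
    integral_Psi_Ioi hq hβ, hsymm]
  ring

lemma one_half_sub_GPrimitive_le (hq : 0 ≤ q) (hβ : 0 < β) (a : ℝ) :
    1 / 2 - GPrimitive q β a ≤ q * exp (-β * (a - 1)) := by
  have hint : IntervalIntegrable (nu q β) volume (a - 1) (a + 1) :=
    (monotone_nu hq hβ.le).intervalIntegrable
  have hFTC : ∫ s in (a - 1)..(a + 1), nu q β s =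
      nuPrimitive q β (a + 1) - nuPrimitive q β (a - 1) :=
    intervalIntegral.integral_eq_sub_of_hasDerivAt
      (fun s _ => hasDerivAt_nuPrimitive hq hβ.ne' s) hint
  have hle : ∫ s in (a - 1)..(a + 1), (1 - nu q β s) ≤
      ∫ s in (a - 1)..(a + 1), 2 * q * exp (-β * (a - 1)) := by
    refine intervalIntegral.integral_mono_on (by linarith) (intervalIntegrable_const.sub hint)
      intervalIntegrable_const fun s hs => (one_sub_nu_le hq s).trans
        (mul_le_mul_of_nonneg_left (exp_le_exp.2 (by nlinarith [hs.1])) (by positivity))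
  rw [intervalIntegral.integral_sub intervalIntegrable_const hint, hFTC] at hle
  simp only [intervalIntegral.integral_const, smul_eq_mul] at hle
  rw [GPrimitive]
  linarith

lemma integral_Psi_Ioi_le (hq : 0 < q) (hβ : 0 < β) (a : ℝ) :
    ∫ t in Ioi a, Psi q β t ≤ (q + 1 / q) / 2 * exp (-β * (a - 1)) := by
  rw [integral_Psi_Ioi hq hβ]
  linarith [one_half_sub_GPrimitive_le hq.le hβ a,
    one_half_sub_GPrimitive_le (one_div_pos.2 hq).le hβ a]

section ModulusOfContinuity

variable {f : ℝ → ℝ} {M : ℝ}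

lemma le_supNorm (hM : ∀ y, |f y| ≤ M) (y : ℝ) : |f y| ≤ supNorm f :=
  le_ciSup ⟨M, by rintro _ ⟨z, rfl⟩; exact hM z⟩ y

lemma supNorm_nonneg (hM : ∀ y, |f y| ≤ M) : 0 ≤ supNorm f :=
  (abs_nonneg _).trans (le_supNorm hM 0)

lemma abs_sub_le_two_mul_supNorm (hM : ∀ y, |f y| ≤ M) (y z : ℝ) :
    |f y - f z| ≤ 2 * supNorm f :=
  (abs_sub _ _).trans (by linarith [le_supNorm hM y, le_supNorm hM z])

lemma le_omega (hM : ∀ y, |f y| ≤ M) {θ y z : ℝ} (h : |y - z| ≤ θ) : |f y - f z| ≤ omega f θ :=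
  le_csSup ⟨2 * supNorm f, by rintro d ⟨a, b, -, rfl⟩; exact abs_sub_le_two_mul_supNorm hM a b⟩
    ⟨y, z, h, rfl⟩

lemma omega_nonneg (hM : ∀ y, |f y| ≤ M) {θ : ℝ} (hθ : 0 ≤ θ) : 0 ≤ omega f θ :=
  (abs_nonneg _).trans (le_omega hM (y := 0) (z := 0) (by simpa using hθ))

end ModulusOfContinuity

lemma abs_integral_mul_le {g K : ℝ → ℝ} (hK0 : ∀ t, 0 ≤ K t) (hK : Integrable K)
    (hK1 : ∫ t, K t = 1) (hg : AEStronglyMeasurable g) {a b T : ℝ} (ha : 0 ≤ a)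
    (hga : ∀ t, |t| ≤ T → |g t| ≤ a) (hgb : ∀ t, |g t| ≤ b) :
    |∫ t, g t * K t| ≤ a + b * ((∫ t in Iic (-T), K t) + ∫ t in Ioi T, K t) := by
  have hb : 0 ≤ b := (abs_nonneg _).trans (hgb 0)
  have hpt (t : ℝ) :
      |g t * K t| ≤ a * K t + b * ((Iic (-T)).indicator K t + (Ioi T).indicator K t) := by
    have hI₁ : 0 ≤ (Iic (-T)).indicator K t := indicator_nonneg (fun s _ => hK0 s) t
    have hI₂ : 0 ≤ (Ioi T).indicator K t := indicator_nonneg (fun s _ => hK0 s) t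
    rw [abs_mul, abs_of_nonneg (hK0 t)]
    rcases le_or_gt |t| T with ht | ht
    · nlinarith [hga t ht, hK0 t]
    · have hKt : K t ≤ (Iic (-T)).indicator K t + (Ioi T).indicator K t := by
        rcases lt_abs.1 ht with h | h
        · rw [indicator_of_mem (show t ∈ Ioi T from h)]
          linarith
        · rw [indicator_of_mem (show t ∈ Iic (-T) from by rw [mem_Iic]; linarith)]
          linarith
      nlinarith [hgb t, hK0 t]
  have hI₁ : Integrable ((Iic (-T)).indicator K) := hK.indicator measurableSet_Iic
  have hI₂ : Integrable ((Ioi T).indicator K) := hK.indicator measurableSet_Ioi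
  have hI : Integrable fun t => (Iic (-T)).indicator K t + (Ioi T).indicator K t := hI₁.add hI₂
  calc |∫ t, g t * K t| ≤ ∫ t, |g t * K t| := abs_integral_le_integral_abs
    _ ≤ ∫ t, (a * K t + b * ((Iic (-T)).indicator K t + (Ioi T).indicator K t)) :=
        integral_mono (hK.bdd_mul hg (.of_forall hgb)).abs
          ((hK.const_mul a).add (hI.const_mul b)) hpt
    _ = a + b * ((∫ t in Iic (-T), K t) + ∫ t in Ioi T, K t) := by
        rw [integral_add (hK.const_mul a) (hI.const_mul b), integral_const_mul,
          integral_const_mul, integral_add hI₁ hI₂, integral_indicator measurableSet_Iic,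
          integral_indicator measurableSet_Ioi, hK1, mul_one]

lemma abs_integral_comp_sub_div_mul_sub_le {f K : ℝ → ℝ} {M : ℝ} (hK0 : ∀ t, 0 ≤ K t)
    (hK : Integrable K) (hK1 : ∫ t, K t = 1) (hf : Measurable f) (hM : ∀ y, |f y| ≤ M)
    (x : ℝ) {c T : ℝ} (hc : 0 < c) (hT : 0 ≤ T) :
    |(∫ t, f (x - t / c) * K t) - f x| ≤
      omega f (T / c) + 2 * supNorm f * ((∫ t in Iic (-T), K t) + ∫ t in Ioi T, K t) := by
  have hfc : Measurable fun t => f (x - t / c) := hf.comp (by fun_prop)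
  have hfK : Integrable fun t => f (x - t / c) * K t :=
    hK.bdd_mul hfc.aestronglyMeasurable (.of_forall fun t => hM _)
  have hsub : (∫ t, f (x - t / c) * K t) - f x = ∫ t, (f (x - t / c) - f x) * K t := by
    simp only [sub_mul]
    rw [integral_sub hfK (hK.const_mul _), integral_const_mul, hK1, mul_one]
  rw [hsub]
  refine abs_integral_mul_le hK0 hK hK1 (hfc.sub_const _).aestronglyMeasurable
    (omega_nonneg hM (by positivity)) (fun t ht => le_omega hM ?_)
    (fun t => abs_sub_le_two_mul_supNorm hM _ _)
  rw [sub_sub_cancel_left, abs_neg, abs_div, abs_of_pos hc]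
  gcongr

lemma B_eq_integral {n : ℕ} (hn : n ≠ 0) (f : ℝ → ℝ) (x : ℝ) :
    B q β n f x = ∫ t, f (x - t / n) * Psi q β t := by
  rw [B, ← integral_sub_left_eq_self _ volume ((n : ℝ) * x)]
  congr 1 with v
  rw [sub_sub_cancel]
  congr 2
  field_simp

theorem B_quantitative_general (q β α : ℝ) (hq : 0 < q) (hβ : 0 < β)
    (n : ℕ) (hn : 2 < (n : ℝ) ^ (1 - α))
    (f : ℝ → ℝ) (hf : Continuous f) (hfb : ∃ M : ℝ, ∀ x : ℝ, |f x| ≤ M) (x : ℝ) :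
    |B q β n f x - f x| ≤
      omega f ((n : ℝ) ^ (-α)) +
        2 * (q + 1/q) * supNorm f * Real.exp (-β * ((n : ℝ) ^ (1 - α) - 1)) := by
  obtain ⟨M, hM⟩ := hfb
  have hn0 : (0 : ℝ) < n := by
    refine Nat.cast_pos.2 (Nat.pos_of_ne_zero fun h => ?_)
    rw [h, Nat.cast_zero] at hn
    linarith [zero_rpow_le_one (1 - α)]
  set T := (n : ℝ) ^ (1 - α)
  have hTn : T / n = (n : ℝ) ^ (-α) := by
    rw [← rpow_sub_one hn0.ne', sub_sub_cancel_left]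
  have htail := integral_Psi_Ioi_le hq hβ T
  calc |B q β n f x - f x| = |(∫ t, f (x - t / n) * Psi q β t) - f x| := by
        rw [B_eq_integral (by exact_mod_cast hn0.ne')]
    _ ≤ omega f (T / n) +
          2 * supNorm f * ((∫ t in Iic (-T), Psi q β t) + ∫ t in Ioi T, Psi q β t) :=
        abs_integral_comp_sub_div_mul_sub_le (Psi_nonneg hq hβ.le) (integrable_Psi hq hβ)
          (integral_Psi hq hβ) hf.measurable hM x hn0 (by positivity)
    _ ≤ omega f ((n : ℝ) ^ (-α)) + 2 * supNorm f *
          ((q + 1 / q) / 2 * exp (-β * (T - 1)) + (q + 1 / q) / 2 * exp (-β * (T - 1))) := by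
        rw [hTn, integral_Psi_Iic_neg hq]
        have := supNorm_nonneg hM
        gcongr
    _ = _ := by ring

theorem B_quantitative (q β α : ℝ) (hq : 0 < q) (hβ : 0 < β)
    (hα0 : 0 < α) (hα1 : α < 1) (n : ℕ) (hn : 2 < (n : ℝ) ^ (1 - α))
    (f : ℝ → ℝ) (hf : Continuous f) (hfb : ∃ M : ℝ, ∀ x : ℝ, |f x| ≤ M) (x : ℝ) :
    |B q β n f x - f x| ≤
      omega f ((n : ℝ) ^ (-α)) +
        2 * (q + 1/q) * supNorm f * Real.exp (-β * ((n : ℝ) ^ (1 - α) - 1)) :=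
  B_quantitative_general q β α hq hβ n hn f hf hfb x
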